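/- Let B ⊑ B̂ be a fragment extension of bridges satisfying weak monotonicity (wm), and let ι be an interpretation for B̂ restricting to one for B (so (B, B̂, ι) is an arch). Then for all sets of sentences R, R' ⊆ L̂₁: if (T₁ ∪ R)^⊢ ∩ L₁ ⊆ (T₁ ∪ R')^⊢ ∩ L₁, then (T₂ ∪ ιR)^⊢ ∩ L₂ ⊆ (T₂ ∪ ιR')^⊢ ∩ L₂. -/

import Mathlib

open FirstOrder Set

universe u v w u₁ v₁ u₂ v₂

namespace PaperStmt

/-- An `𝔏`-fragment: a set of `𝔏`-sentences containing `⊤` and `⊥` and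
closed under `∧` and `∨`. -/
def IsFragment {L : FirstOrder.Language.{u, v}} (F : Set L.Sentence) : Prop :=
  (⊤ : L.Sentence) ∈ F ∧ (⊥ : L.Sentence) ∈ F ∧
    ∀ φ ψ : L.Sentence, φ ∈ F → ψ ∈ F → (φ ⊓ ψ) ∈ F ∧ (φ ⊔ ψ) ∈ F

/-- `T_F = T^⊢ ∩ F`: the consequences of the theory `T` that lie in the fragment `F`. -/
def cons {L : FirstOrder.Language.{u, v}} (T : L.Theory) (F : Set L.Sentence) :
    Set L.Sentence :=
  {φ | φ ∈ F ∧ T ⊨ᵇ φ}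

/-- Bundled models of `T` (in the universe matching semantic consequence `⊨ᵇ`). -/
abbrev Mod {L : FirstOrder.Language.{u, v}} (T : L.Theory) : Type (max u v + 1) :=
  FirstOrder.Language.Theory.ModelType.{u, v, max u v} T

/-- `Th_F(M)`: the sentences in the fragment `F` true in the model `M`. -/
def th {L : FirstOrder.Language.{u, v}} {T : L.Theory} (F : Set L.Sentence) (M : Mod T) :
    Set L.Sentence :=
  {φ | φ ∈ F ∧ M ⊨ φ}

/-
Fix `M ⊨ T₂ ∪ ιR'`; it suffices to find `M' ⊨ T₂ ∪ ιR` with `Th_{L₂}(M') ⊆ Th_{L₂}(M)`.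
Since `σM ⊨ T₁ ∪ R'`, every `L₁`-consequence of `T₁ ∪ R` holds in `σM`. As `L₁` is closed under
finite disjunctions, compactness then gives a model `N` of `T₁ ∪ R` together with the negations of
all `L₁`-sentences false in `σM`, i.e. `Th_{L₁}(N) ⊆ Th_{L₁}(σM)`. Weak monotonicity yields `M'`
with `Th_{L̂₁}(σM') = Th_{L̂₁}(N)`, so `σM' ⊨ R`, i.e. `M' ⊨ ιR`, and `Th_{L₂}(M') ⊆ Th_{L₂}(M)`.
-/

section Fragment

variable {L : FirstOrder.Language.{u, v}}

open Language Theory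

theorem IsFragment.foldr_sup_mem {F : Set L.Sentence} (hF : IsFragment F) {l : List L.Sentence}
    (hl : ∀ φ ∈ l, φ ∈ F) : l.foldr (· ⊔ ·) ⊥ ∈ F := by
  induction l with
  | nil => exact hF.2.1
  | cons φ l ih =>
    simp only [List.mem_cons, forall_eq_or_imp] at hl
    exact (hF.2.2 _ _ hl.1 (ih hl.2)).2

theorem Sentence.realize_foldr_sup {M : Type w} [L.Structure M] (l : List L.Sentence) :
    M ⊨ l.foldr (· ⊔ ·) ⊥ ↔ ∃ φ ∈ l, M ⊨ φ :=
  BoundedFormula.realize_foldr_sup l _ _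

theorem isSatisfiable_union_not_image {T : L.Theory} {D : Set L.Sentence}
    (hD : ∀ s : Finset L.Sentence, ↑s ⊆ D → ¬ T ⊨ᵇ s.toList.foldr (· ⊔ ·) ⊥) :
    (T ∪ Formula.not '' D).IsSatisfiable := by
  classical
  rw [isSatisfiable_iff_isFinitelySatisfiable]
  intro t ht
  obtain ⟨t₁, t₂, rfl, ht₁, ht₂⟩ := Finset.subset_union_elim ht
  obtain ⟨s, hsD, rfl⟩ := Finset.subset_set_image_iff.1 (ht₂.trans sdiff_subset)
  by_contra hunsat
  refine hD s hsD (models_sentence_iff.2 fun M => ?_)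
  by_contra hM
  suffices M ⊨ (↑(t₁ ∪ s.image Formula.not) : L.Theory) from hunsat (Model.isSatisfiable M)
  refine model_iff _ |>.2 fun ψ hψ => ?_
  rcases Finset.mem_union.1 (Finset.mem_coe.1 hψ) with hψ | hψ
  · exact realize_sentence_of_mem T (ht₁ hψ)
  · obtain ⟨χ, hχ, rfl⟩ := Finset.mem_image.1 hψ
    exact Sentence.realize_not M |>.2 fun hχM =>
      hM ((Sentence.realize_foldr_sup _).2 ⟨χ, Finset.mem_toList.2 hχ, hχM⟩)

theorem IsFragment.exists_model_realize_imp {F : Set L.Sentence} (hF : IsFragment F)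
    {T : L.Theory} (K : Type w) [L.Structure K] (hK : ∀ φ ∈ cons T F, K ⊨ φ) :
    ∃ N : Mod T, ∀ φ ∈ F, N ⊨ φ → K ⊨ φ := by
  set D : Set L.Sentence := {φ | φ ∈ F ∧ ¬ K ⊨ φ}
  have hsat : (T ∪ Formula.not '' D).IsSatisfiable := by
    refine isSatisfiable_union_not_image fun s hsD hT => ?_
    have hmem : ∀ φ ∈ s.toList, φ ∈ D := fun φ hφ => hsD (Finset.mem_toList.1 hφ)
    obtain ⟨φ, hφs, hφK⟩ := (Sentence.realize_foldr_sup _).1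
      (hK _ ⟨hF.foldr_sup_mem fun φ hφ => (hmem φ hφ).1, hT⟩)
    exact (hmem φ hφs).2 hφK
  obtain ⟨N⟩ := hsat
  refine ⟨N.subtheoryModel subset_union_left, fun φ hφF hφN => ?_⟩
  by_contra hφK
  exact (Sentence.realize_not N).1
    (realize_sentence_of_mem (T ∪ Formula.not '' D) (Or.inr ⟨φ, ⟨hφF, hφK⟩, rfl⟩)) hφN

end Fragment

theorem model_image_iff {L₁ : FirstOrder.Language.{u₁, v₁}} {L₂ : FirstOrder.Language.{u₂, v₂}}
    {T₁ : L₁.Theory} {T₂ : L₂.Theory} {σ : Mod T₂ → Mod T₁} {ι : L₁.Sentence → L₂.Sentence}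
    {S : Set L₁.Sentence} (hι : ∀ φ ∈ S, ∀ M : Mod T₂, (σ M ⊨ φ ↔ M ⊨ ι φ)) (M : Mod T₂) :
    M ⊨ ι '' S ↔ σ M ⊨ S := by
  simp only [Language.Theory.model_iff, forall_mem_image]
  exact forall₂_congr fun φ hφ => (hι φ hφ M).symm

theorem statement_7_general {L₁ : FirstOrder.Language.{u₁, v₁}} {L₂ : FirstOrder.Language.{u₂, v₂}}
    {F₁ Fh₁ : Set L₁.Sentence} {F₂ : Set L₂.Sentence} {T₁ : L₁.Theory} {T₂ : L₂.Theory}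
    (hF₁ : IsFragment F₁)
    (σ : Mod T₂ → Mod T₁)
    (ι : L₁.Sentence → L₂.Sentence)
    (hι : ∀ φ ∈ Fh₁, ∀ M : Mod T₂, (σ M ⊨ φ ↔ M ⊨ ι φ))
    (hwm : ∀ (M : Mod T₂) (N : Mod T₁), th F₁ N ⊆ th F₁ (σ M) →
      ∃ M' : Mod T₂, th Fh₁ (σ M') = th Fh₁ N ∧ th F₂ M' ⊆ th F₂ M)
    (R R' : Set L₁.Sentence) (hR : R ⊆ Fh₁) (hR' : R' ⊆ Fh₁)
    (h : cons (T₁ ∪ R) F₁ ⊆ cons (T₁ ∪ R') F₁) :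
    cons (T₂ ∪ ι '' R) F₂ ⊆ cons (T₂ ∪ ι '' R') F₂ := by
  rintro φ ⟨hφF, hφ⟩
  refine ⟨hφF, Language.Theory.models_sentence_iff.2 fun M₀ => ?_⟩
  have hM₀ := Language.Theory.model_union_iff.1 M₀.is_model
  let M : Mod T₂ := M₀.subtheoryModel subset_union_left
  have hσM : σ M ⊨ T₁ ∪ R' := Language.Theory.model_union_iff.2
    ⟨inferInstance, (model_image_iff (fun r hr => hι r (hR' hr)) M).1 hM₀.2⟩
  obtain ⟨N, hN⟩ := hF₁.exists_model_realize_imp (σ M) fun ψ hψ => (h hψ).2.realize_sentence (σ M)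
  obtain ⟨M', hM'σ, hM'M⟩ :=
    hwm M (N.subtheoryModel subset_union_left) fun ψ hψ => ⟨hψ.1, hN ψ hψ.1 hψ.2⟩
  have hσM'R : σ M' ⊨ R := Language.Theory.model_iff _ |>.2 fun r hr =>
    (hM'σ ▸ ⟨hR hr, Language.Theory.realize_sentence_of_mem (T₁ ∪ R) (Or.inr hr)⟩ :
      r ∈ th Fh₁ (σ M')).2
  have : M' ⊨ T₂ ∪ ι '' R := Language.Theory.model_union_iff.2
    ⟨inferInstance, (model_image_iff (fun r hr => hι r (hR hr)) M').2 hσM'R⟩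
  exact (hM'M ⟨hφF, hφ.realize_sentence M'⟩).2

/-- let `(B, B̂, ι)` be an arch (a fragment extension `B ⊑ B̂` of bridges with an
interpretation `ι` for `B̂` restricting to one for `B`) satisfying weak monotonicity (wm).
Then for all `R, R' ⊆ L̂₁`: if `(T₁ ∪ R)^⊢ ∩ L₁ ⊆ (T₁ ∪ R')^⊢ ∩ L₁` then
`(T₂ ∪ ιR)^⊢ ∩ L₂ ⊆ (T₂ ∪ ιR')^⊢ ∩ L₂`. -/
theorem statement_7 {L₁ : FirstOrder.Language.{u₁, v₁}} {L₂ : FirstOrder.Language.{u₂, v₂}}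
    {F₁ Fh₁ : Set L₁.Sentence} {F₂ Fh₂ : Set L₂.Sentence} {T₁ : L₁.Theory} {T₂ : L₂.Theory}
    (hF₁ : IsFragment F₁) (hF₂ : IsFragment F₂) (hFh₁ : IsFragment Fh₁) (hFh₂ : IsFragment Fh₂)
    (hsub₁ : F₁ ⊆ Fh₁) (hsub₂ : F₂ ⊆ Fh₂)
    (σ : Mod T₂ → Mod T₁)
    (ι : L₁.Sentence → L₂.Sentence)
    (hιFh : ∀ φ ∈ Fh₁, ι φ ∈ Fh₂) (hιF : ∀ φ ∈ F₁, ι φ ∈ F₂)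
    (hι : ∀ φ ∈ Fh₁, ∀ M : Mod T₂, (σ M ⊨ φ ↔ M ⊨ ι φ))
    (hwm : ∀ (M : Mod T₂) (N : Mod T₁), th F₁ N ⊆ th F₁ (σ M) →
      ∃ M' : Mod T₂, th Fh₁ (σ M') = th Fh₁ N ∧ th F₂ M' ⊆ th F₂ M)
    (R R' : Set L₁.Sentence) (hR : R ⊆ Fh₁) (hR' : R' ⊆ Fh₁)
    (h : cons (T₁ ∪ R) F₁ ⊆ cons (T₁ ∪ R') F₁) :
    cons (T₂ ∪ ι '' R) F₂ ⊆ cons (T₂ ∪ ι '' R') F₂ :=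
  statement_7_general hF₁ σ ι hι hwm R R' hR hR' h

end PaperStmt
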